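/- Let ρ : U → ℂ be holomorphic on an open set U ⊆ ℂ, and define ψ₁ = ρ·√(∂̄ρ̄)/(1+|ρ|²), ψ₂ = √(∂ρ)/(1+|ρ|²), p = |∂ρ|/(1+|ρ|²), where a smooth branch of the square root of the holomorphic function ∂ρ is assumed to exist on U (e.g. U simply connected and ∂ρ nonvanishing, with √(∂̄ρ̄) the conjugate branch). Then ψ₁, ψ₂ satisfy the Dirac system ∂ψ₁ = pψ₂, ∂̄ψ₂ = −pψ₁, and moreover p = |ψ₁|² + |ψ₂|², so (ψ₁, ψ₂) solves the CMC-1 system ∂ψ₁ = (|ψ₁|²+|ψ₂|²)ψ₂, ∂̄ψ₂ = −(|ψ₁|²+|ψ₂|²)ψ₁. -/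

import Mathlib

open Complex ComplexConjugate

/-- Wirtinger derivative ∂ = (∂ₓ - i∂_y)/2. -/
noncomputable def wd (f : ℂ → ℂ) (z : ℂ) : ℂ :=
  (fderiv ℝ f z 1 - Complex.I * fderiv ℝ f z Complex.I) / 2

/-- Wirtinger derivative ∂̄ = (∂ₓ + i∂_y)/2. -/
noncomputable def wdb (f : ℂ → ℂ) (z : ℂ) : ℂ :=
  (fderiv ℝ f z 1 + Complex.I * fderiv ℝ f z Complex.I) / 2

lemma fderiv_conj_apply (f : ℂ → ℂ) (z v : ℂ) :
    fderiv ℝ (fun y => conj (f y)) z v = conj (fderiv ℝ f z v) := by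
  have h : (fun y => conj (f y)) = (Complex.conjCLE : ℂ ≃L[ℝ] ℂ) ∘ f := rfl
  rw [h, ContinuousLinearEquiv.comp_fderiv]; simp

lemma wd_conj (f : ℂ → ℂ) (z : ℂ) : wd (fun y => conj (f y)) z = conj (wdb f z) := by
  simp only [wd, wdb, fderiv_conj_apply, map_div₀, map_add, map_mul, Complex.conj_I, Complex.conj_ofNat]
  push_cast; ring

lemma wdb_conj (f : ℂ → ℂ) (z : ℂ) : wdb (fun y => conj (f y)) z = conj (wd f z) := by
  simp only [wd, wdb, fderiv_conj_apply, map_div₀, map_sub, map_mul, Complex.conj_I, Complex.conj_ofNat]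
  push_cast; ring

lemma wd_mul (f g : ℂ → ℂ) (z : ℂ) (hf : DifferentiableAt ℝ f z)
    (hg : DifferentiableAt ℝ g z) :
    wd (fun y => f y * g y) z = wd f z * g z + f z * wd g z := by
  simp only [wd, fderiv_fun_mul hf hg, ContinuousLinearMap.add_apply,
    ContinuousLinearMap.smul_apply, smul_eq_mul]
  ring

lemma wdb_mul (f g : ℂ → ℂ) (z : ℂ) (hf : DifferentiableAt ℝ f z)
    (hg : DifferentiableAt ℝ g z) :
    wdb (fun y => f y * g y) z = wdb f z * g z + f z * wdb g z := by
  simp only [wdb, fderiv_fun_mul hf hg, ContinuousLinearMap.add_apply,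
    ContinuousLinearMap.smul_apply, smul_eq_mul]
  ring

lemma wd_congr {f g : ℂ → ℂ} {z : ℂ} (h : f =ᶠ[nhds z] g) : wd f z = wd g z := by
  simp only [wd, h.fderiv_eq]

lemma wdb_congr {f g : ℂ → ℂ} {z : ℂ} (h : f =ᶠ[nhds z] g) : wdb f z = wdb g z := by
  simp only [wdb, h.fderiv_eq]

lemma hol_of_wdb {f : ℂ → ℂ} {z : ℂ} (hf : DifferentiableAt ℝ f z) (h : wdb f z = 0) :
    HasDerivAt f (wd f z) z := by
  have h' : fderiv ℝ f z 1 + Complex.I * fderiv ℝ f z Complex.I = 0 := by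
    simp only [wdb, div_eq_zero_iff] at h
    rcases h with h' | h'
    · exact h'
    · norm_num at h'
  have hI : fderiv ℝ f z Complex.I = Complex.I * fderiv ℝ f z 1 := by
    linear_combination (-Complex.I) * h' + (fderiv ℝ f z Complex.I) * Complex.I_sq
  have hwd : wd f z = fderiv ℝ f z 1 := by
    rw [wd, hI]
    linear_combination (-(fderiv ℝ f z 1)/2) * Complex.I_sq
  have hL : ((wd f z • (1 : ℂ →L[ℂ] ℂ)).restrictScalars ℝ) = fderiv ℝ f z := by
    ext x
    have hx : x = x.re • (1:ℂ) + x.im • Complex.I := by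
      simp only [Complex.real_smul, smul_eq_mul, mul_one]
      exact_mod_cast (Complex.re_add_im x).symm
    rw [hx]
    simp only [map_add, map_smul, ContinuousLinearMap.coe_restrictScalars',
      ContinuousLinearMap.smul_apply, ContinuousLinearMap.one_apply, hI, hwd,
      smul_eq_mul]
    simp only [Complex.real_smul]
    ring
  have hF : HasFDerivAt f (wd f z • (1 : ℂ →L[ℂ] ℂ)) z :=
    hasFDerivAt_of_restrictScalars ℝ hf.hasFDerivAt hL
  have := hF.hasDerivAt
  simpa using this

lemma wdb_of_hol {f : ℂ → ℂ} {z : ℂ} (hf : DifferentiableAt ℂ f z) : wdb f z = 0 := by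
  have h := hf.fderiv_restrictScalars ℝ
  have hI : fderiv ℝ f z Complex.I = Complex.I * fderiv ℝ f z 1 := by
    rw [h]
    simp only [ContinuousLinearMap.coe_restrictScalars']
    have := (fderiv ℂ f z).map_smul Complex.I (1:ℂ)
    simpa [smul_eq_mul] using this
  rw [wdb, hI]
  linear_combination (fderiv ℝ f z 1 / 2) * Complex.I_sq

lemma wd_const_add (c : ℂ) (f : ℂ → ℂ) (z : ℂ) :
    wd (fun y => c + f y) z = wd f z := by
  simp [wd, fderiv_const_add]

lemma wdb_const_add (c : ℂ) (f : ℂ → ℂ) (z : ℂ) :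
    wdb (fun y => c + f y) z = wdb f z := by
  simp [wdb, fderiv_const_add]

lemma wdb_continuous {f : ℂ → ℂ} (hf : ContDiff ℝ (⊤ : ℕ∞) f) : Continuous (wdb f) := by
  have h : Continuous (fderiv ℝ f) := hf.continuous_fderiv (by simp)
  have h1 : Continuous fun z => fderiv ℝ f z 1 := h.clm_apply continuous_const
  have hI : Continuous fun z => fderiv ℝ f z Complex.I := h.clm_apply continuous_const
  unfold wdb
  fun_prop

lemma wdb_zero_of_mul {U : Set ℂ} (hU : IsOpen U) {s : ℂ → ℂ} (hs : ContDiff ℝ (⊤ : ℕ∞) s)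
    (hmul : ∀ z ∈ U, s z * wdb s z = 0) : ∀ z ∈ U, wdb s z = 0 := by
  intro z hz
  set A : Set ℂ := {w | w ∈ U ∧ s w ≠ 0} with hA
  have hvan : ∀ w ∈ A, wdb s w = 0 := by
    intro w hw
    have := hmul w hw.1
    exact (mul_eq_zero.mp this).resolve_left hw.2
  by_cases hcl : z ∈ closure A
  · have heq : Set.EqOn (wdb s) (fun _ => 0) (closure A) := by
      apply Set.EqOn.closure (fun w hw => hvan w hw) (wdb_continuous hs) continuous_const
    exact heq hcl
  · -- s vanishes on a neighborhood of z
    have hV : ∀ᶠ w in nhds z, s w = 0 := by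
      have h1 : Aᶜ ∈ nhds z := by
        rw [mem_nhds_iff]
        exact ⟨(closure A)ᶜ, Set.compl_subset_compl.mpr subset_closure,
          isClosed_closure.isOpen_compl, hcl⟩
      filter_upwards [h1, hU.mem_nhds hz] with w hw hwU
      by_contra hsw
      exact hw ⟨hwU, hsw⟩
    have : wdb s z = wdb (fun _ => (0:ℂ)) z := wdb_congr hV
    rw [this]
    simp [wdb]

theorem stmt_13 (U : Set ℂ) (hU : IsOpen U)
    (ρ : ℂ → ℂ) (hρ : ContDiff ℝ (⊤ : ℕ∞) ρ) (hρhol : ∀ z ∈ U, wdb ρ z = 0)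
    (s : ℂ → ℂ) (hs : ContDiff ℝ (⊤ : ℕ∞) s) (hs2 : ∀ z ∈ U, (s z) ^ 2 = wd ρ z)
    (ψ₁ ψ₂ : ℂ → ℂ) (p : ℂ → ℝ)
    (hψ₁ : ∀ z, ψ₁ z = ρ z * conj (s z) / (1 + ‖ρ z‖ ^ 2))
    (hψ₂ : ∀ z, ψ₂ z = s z / (1 + ‖ρ z‖ ^ 2))
    (hp : ∀ z, p z = ‖wd ρ z‖ / (1 + ‖ρ z‖ ^ 2)) :
    (∀ z ∈ U, wd ψ₁ z = (p z : ℂ) * ψ₂ z) ∧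
    (∀ z ∈ U, wdb ψ₂ z = -(p z : ℂ) * ψ₁ z) ∧
    (∀ z ∈ U, p z = ‖ψ₁ z‖ ^ 2 + ‖ψ₂ z‖ ^ 2) ∧
    (∀ z ∈ U, wd ψ₁ z =
      ((‖ψ₁ z‖ ^ 2 + ‖ψ₂ z‖ ^ 2 : ℝ) : ℂ) * ψ₂ z) ∧
    (∀ z ∈ U, wdb ψ₂ z =
      -((‖ψ₁ z‖ ^ 2 + ‖ψ₂ z‖ ^ 2 : ℝ) : ℂ) * ψ₁ z) := by
  -- basic differentiability
  have hρd : Differentiable ℝ ρ := hρ.differentiable (by simp)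
  have hsd : Differentiable ℝ s := hs.differentiable (by simp)
  have hsconj : Differentiable ℝ (fun y => conj (s y)) :=
    (Complex.conjCLE : ℂ ≃L[ℝ] ℂ).differentiable.comp hsd
  have hρconj : Differentiable ℝ (fun y => conj (ρ y)) :=
    (Complex.conjCLE : ℂ ≃L[ℝ] ℂ).differentiable.comp hρd
  -- denominator as a complex function
  set N : ℂ → ℂ := fun y => 1 + ρ y * conj (ρ y) with hN
  have hNcast : ∀ z, (1 + ((‖ρ z‖ : ℝ) : ℂ) ^ 2) = N z := by
    intro z
    have hzz : N z = 1 + ρ z * conj (ρ z) := rfl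
    rw [hzz, ← Complex.ofReal_pow, Complex.sq_norm, Complex.mul_conj]
  have hNcast' : ∀ z, ((1 + ‖ρ z‖ ^ 2 : ℝ) : ℂ) = N z := by
    intro z
    rw [← hNcast z]
    push_cast
    ring
  have hNne : ∀ z, N z ≠ 0 := by
    intro z
    rw [← hNcast' z]
    exact_mod_cast ne_of_gt (by positivity)
  have hNd : Differentiable ℝ N := (differentiable_const _).add (hρd.mul hρconj)
  -- ρ is holomorphic on U
  have hρhasD : ∀ z ∈ U, HasDerivAt ρ (wd ρ z) z := fun z hz =>
    hol_of_wdb (hρd z) (hρhol z hz)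
  have hderiv_eq : ∀ z ∈ U, deriv ρ z = wd ρ z := fun z hz => (hρhasD z hz).deriv
  have hρdiffOn : DifferentiableOn ℂ ρ U := fun z hz =>
    (hρhasD z hz).differentiableAt.differentiableWithinAt
  have hρan : AnalyticOnNhd ℂ ρ U := hρdiffOn.analyticOnNhd hU
  have hderiv_an : AnalyticOnNhd ℂ (deriv ρ) U := hρan.deriv
  -- wdb s = 0 on U
  have hwdbs : ∀ z ∈ U, wdb s z = 0 := by
    apply wdb_zero_of_mul hU hs
    intro z hz
    have h1 : (fun y => s y * s y) =ᶠ[nhds z] deriv ρ := by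
      filter_upwards [hU.mem_nhds hz] with w hw
      rw [← sq, hs2 w hw, hderiv_eq w hw]
    have h2 : wdb (fun y => s y * s y) z = 0 := by
      rw [wdb_congr h1]
      exact wdb_of_hol (hderiv_an z hz).differentiableAt
    rw [wdb_mul s s z (hsd z) (hsd z)] at h2
    have : (2:ℂ) * (s z * wdb s z) = 0 := by linear_combination h2
    have h3 := mul_eq_zero.mp this
    rcases h3 with h3 | h3
    · norm_num at h3
    · exact h3
  -- rewritten forms of ψ₁, ψ₂, p
  have hψ₁' : ∀ z, ψ₁ z = ρ z * conj (s z) / N z := fun z => by rw [hψ₁, hNcast]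
  have hψ₂' : ∀ z, ψ₂ z = s z / N z := fun z => by rw [hψ₂, hNcast]
  have hpz : ∀ z ∈ U, ((p z : ℝ) : ℂ) = s z * conj (s z) / N z := by
    intro z hz
    rw [hp]
    push_cast
    rw [← hs2 z hz, norm_pow, hNcast]
    congr 1
    rw [Complex.sq_norm, ← Complex.mul_conj]
  -- derivatives of N on U
  have hwdN : ∀ z ∈ U, wd N z = s z ^ 2 * conj (ρ z) := by
    intro z hz
    rw [hN, wd_const_add, wd_mul ρ _ z (hρd z) (hρconj z), wd_conj, hρhol z hz, map_zero,
      mul_zero, add_zero, ← hs2 z hz]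
  have hwdbN : ∀ z ∈ U, wdb N z = ρ z * conj (s z) ^ 2 := by
    intro z hz
    rw [hN, wdb_const_add, wdb_mul ρ _ z (hρd z) (hρconj z), wdb_conj, hρhol z hz, zero_mul,
      zero_add, ← hs2 z hz, map_pow]
  -- differentiability of ψ₁, ψ₂
  have hψ₁d : Differentiable ℝ ψ₁ := by
    have : ψ₁ = fun z => ρ z * conj (s z) * (N z)⁻¹ := by
      funext y
      rw [hψ₁' y, div_eq_mul_inv]
    rw [this]
    exact (hρd.mul hsconj).mul (hNd.inv hNne)
  have hψ₂d : Differentiable ℝ ψ₂ := by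
    have : ψ₂ = fun z => s z * (N z)⁻¹ := by
      funext y
      rw [hψ₂' y, div_eq_mul_inv]
    rw [this]
    exact hsd.mul (hNd.inv hNne)
  -- main derivative identity for ψ₁
  have key1 : ∀ z ∈ U, wd ψ₁ z = (p z : ℂ) * ψ₂ z := by
    intro z hz
    have e1 : (fun y => ψ₁ y * N y) = fun y => ρ y * conj (s y) := by
      funext y
      rw [hψ₁' y, div_mul_cancel₀ _ (hNne y)]
    have h2 : wd (fun y => ψ₁ y * N y) z = wd ψ₁ z * N z + ψ₁ z * wd N z :=
      wd_mul ψ₁ N z (hψ₁d z) (hNd z)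
    have h3 : wd (fun y => ρ y * conj (s y)) z = s z ^ 2 * conj (s z) := by
      rw [wd_mul ρ _ z (hρd z) (hsconj z), wd_conj, hwdbs z hz, map_zero, mul_zero,
        add_zero, ← hs2 z hz]
    rw [e1, h3] at h2
    rw [hψ₁' z, hwdN z hz] at h2
    rw [hpz z hz, hψ₂' z]
    have hNz := hNne z
    field_simp at h2 ⊢
    linear_combination -h2
  -- main derivative identity for ψ₂
  have key2 : ∀ z ∈ U, wdb ψ₂ z = -(p z : ℂ) * ψ₁ z := by
    intro z hz
    have e1 : (fun y => ψ₂ y * N y) = fun y => s y := by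
      funext y
      rw [hψ₂' y, div_mul_cancel₀ _ (hNne y)]
    have h2 : wdb (fun y => ψ₂ y * N y) z = wdb ψ₂ z * N z + ψ₂ z * wdb N z :=
      wdb_mul ψ₂ N z (hψ₂d z) (hNd z)
    rw [e1, hwdbs z hz] at h2
    rw [hψ₂' z, hwdbN z hz] at h2
    rw [hpz z hz, hψ₁' z]
    have hNz := hNne z
    field_simp at h2 ⊢
    linear_combination (-1 : ℂ) * h2
  -- p in terms of ψ₁, ψ₂
  have key3 : ∀ z ∈ U, p z = ‖ψ₁ z‖ ^ 2 + ‖ψ₂ z‖ ^ 2 := by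
    intro z hz
    have habs : ‖wd ρ z‖ = ‖s z‖ ^ 2 := by
      rw [← hs2 z hz, norm_pow]
    have hD : (0:ℝ) < 1 + ‖ρ z‖ ^ 2 := by positivity
    rw [hp, hψ₁, hψ₂, habs]
    have hcast : (1 + ((‖ρ z‖ : ℝ) : ℂ) ^ 2) = ((1 + ‖ρ z‖ ^ 2 : ℝ) : ℂ) := by
      push_cast
      ring
    rw [hcast, norm_div, norm_div, norm_mul, Complex.norm_conj, Complex.norm_real,
      Real.norm_eq_abs, abs_of_pos hD]
    field_simp
    ring
  refine ⟨key1, key2, key3, ?_, ?_⟩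
  · intro z hz
    rw [← key3 z hz]
    exact key1 z hz
  · intro z hz
    rw [← key3 z hz]
    exact key2 z hz
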